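/- Let μ > 0, T > 0, and let c_ε : [0,T] → ℂ satisfy ‖c_ε‖_{L²(0,T)} ≤ C uniformly in ε and suppose additionally there is a decomposition c_ε = c_ε¹ + c_ε² with ‖c_ε¹‖_{L¹(0,T)} ≤ C√ε and ‖c_ε²‖_{L²(0,T)} ≤ C. Then t ↦ ∫₀ᵗ c_ε(s) e^{-(μ/√ε)(t−s)} ds tends to 0 in L²(0,T) as ε → 0, with rate ε^{1/4} from the c_ε² part (via Young's convolution inequality ‖f * g‖_{L²} ≤ ‖f‖_{L²}‖g‖_{L¹} and ‖e^{-(μ/√ε)·}‖_{L¹(0,∞)} = √ε/μ). -/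

import Mathlib

/-!
For each `t`, the kernel `e^{-a(t-s)}` with `a = μ/√ε` is bounded by `1`, and its square has
integral at most `1/(2a) = √ε/(2μ)` over `[0, t]`. Hence the `c¹` part of the Duhamel integral is
bounded by `‖c¹‖_{L¹} ≤ C√ε`, and by Cauchy–Schwarz the `c²` part is bounded by
`‖c²‖_{L²} · (√ε/(2μ))^{1/2} = O(ε^{1/4})`. This bound is uniform in `t ∈ [0, T]`, so the
`L²(0, T)` norm is at most `√T` times it.
-/

open MeasureTheory

lemma integral_mul_le_sqrt_mul_of_integral_sq_le {f g : ℝ → ℝ} {a b A B : ℝ} (hab : a ≤ b)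
    (hf : IntervalIntegrable (fun x => f x ^ 2) volume a b)
    (hg : IntervalIntegrable (fun x => g x ^ 2) volume a b) (hA : 0 < A) (hB : 0 < B)
    (hfA : ∫ x in a..b, f x ^ 2 ≤ A) (hgB : ∫ x in a..b, g x ^ 2 ≤ B) :
    ∫ x in a..b, f x * g x ≤ √(A * B) := by
  by_cases hfg : IntervalIntegrable (fun x => f x * g x) volume a b
  swap
  · rw [intervalIntegral.integral_undef hfg]
    positivity
  -- AM-GM `f g ≤ (l f² + g² / l) / 2` with the weight `l = √B / √A` that balances the two terms
  set l := √B / √A with hl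
  have hl0 : 0 < l := by positivity
  have amgm : ∀ x, f x * g x ≤ (l * f x ^ 2 + g x ^ 2 / l) / 2 := fun x => by
    have := sq_nonneg (l * f x - g x)
    field_simp
    nlinarith
  calc ∫ x in a..b, f x * g x
      ≤ ∫ x in a..b, (l * f x ^ 2 + g x ^ 2 / l) / 2 :=
        intervalIntegral.integral_mono_on hab hfg
          (((hf.const_mul l).add (hg.div_const l)).div_const 2) fun x _ => amgm x
    _ = (l * ∫ x in a..b, f x ^ 2) / 2 + (∫ x in a..b, g x ^ 2) / l / 2 := by
        rw [intervalIntegral.integral_div, intervalIntegral.integral_add (hf.const_mul l)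
          (hg.div_const l), intervalIntegral.integral_const_mul, intervalIntegral.integral_div,
          add_div]
    _ ≤ (l * A) / 2 + B / l / 2 := by gcongr
    _ = √(A * B) := by
        have hA' := Real.sq_sqrt hA.le
        have hB' := Real.sq_sqrt hB.le
        rw [hl, Real.sqrt_mul hA.le]
        field_simp
        nlinarith

lemma IntervalIntegrable.norm_of_norm_sq {E : Type*} [NormedAddCommGroup E] {f : ℝ → E}
    {a b : ℝ} (hf : IntervalIntegrable (fun x => ‖f x‖ ^ 2) volume a b) :
    IntervalIntegrable (fun x => ‖f x‖) volume a b := by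
  rw [intervalIntegrable_iff] at hf ⊢
  have : IsFiniteMeasure (volume.restrict (Set.uIoc a b)) :=
    isFiniteMeasure_restrict.2 (by simp [Set.uIoc])
  have hmeas : AEStronglyMeasurable (fun x => ‖f x‖) (volume.restrict (Set.uIoc a b)) := by
    simpa [Real.sqrt_sq (norm_nonneg _)] using
      Real.continuous_sqrt.comp_aestronglyMeasurable hf.aestronglyMeasurable
  refine ((integrable_const (1 : ℝ)).add hf).mono' hmeas (ae_of_all _ fun x => ?_)
  simp only [Pi.add_apply, Real.norm_eq_abs, abs_norm]
  nlinarith [sq_nonneg (‖f x‖ - 1)]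

lemma integral_exp_neg_mul_sub_sq_le {a : ℝ} (ha : 0 < a) (t : ℝ) :
    ∫ s in (0:ℝ)..t, Real.exp (-a * (t - s)) ^ 2 ≤ 1 / (2 * a) := by
  have hderiv : ∀ s ∈ Set.uIcc (0:ℝ) t,
      HasDerivAt (fun u => Real.exp (-2 * a * (t - u)) / (2 * a))
        (Real.exp (-a * (t - s)) ^ 2) s := fun s _ => by
    have hlin : HasDerivAt (fun u => -2 * a * (t - u)) (2 * a) s := by
      simpa using ((hasDerivAt_id s).const_sub t).const_mul (-2 * a)
    refine (hlin.exp.div_const (2 * a)).congr_deriv ?_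
    rw [← Real.exp_nat_mul]
    field_simp
    ring_nf
  rw [intervalIntegral.integral_eq_sub_of_hasDerivAt hderiv
    (Continuous.intervalIntegrable (by fun_prop) _ _), ← sub_div]
  gcongr
  simpa using (Real.exp_pos _).le

lemma sqrt_integral_norm_sq_le {E : Type*} [NormedAddCommGroup E] {g : ℝ → E} {a b M : ℝ}
    (hM : 0 ≤ M) (hg : ∀ t ∈ Set.uIoc a b, ‖g t‖ ≤ M) :
    √(∫ t in a..b, ‖g t‖ ^ 2) ≤ √|b - a| * M := by
  have hint : ∫ t in a..b, ‖g t‖ ^ 2 ≤ M ^ 2 * |b - a| :=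
    (Real.le_norm_self _).trans <| intervalIntegral.norm_integral_le_of_norm_le_const
      fun t ht => by simpa using pow_le_pow_left₀ (norm_nonneg _) (hg t ht) 2
  calc √(∫ t in a..b, ‖g t‖ ^ 2) ≤ √(M ^ 2 * |b - a|) := Real.sqrt_le_sqrt hint
    _ = √|b - a| * M := by rw [Real.sqrt_mul (sq_nonneg M), Real.sqrt_sq hM, mul_comm]

noncomputable def duhamel (a : ℝ) (f : ℝ → ℂ) (t : ℝ) : ℂ :=
  ∫ s in (0:ℝ)..t, f s * ((Real.exp (-a * (t - s)) : ℝ) : ℂ)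

lemma norm_duhamel_le {a t A₁ A₂ : ℝ} {f f₁ f₂ : ℝ → ℂ} (ha : 0 < a) (ht : 0 ≤ t)
    (hA₂ : 0 < A₂) (hf : IntervalIntegrable f volume 0 t)
    (hf₁ : IntervalIntegrable (fun s => ‖f₁ s‖) volume 0 t)
    (hf₂ : IntervalIntegrable (fun s => ‖f₂ s‖ ^ 2) volume 0 t)
    (hsplit : ∀ s, f s = f₁ s + f₂ s)
    (hf₁A : ∫ s in (0:ℝ)..t, ‖f₁ s‖ ≤ A₁) (hf₂A : ∫ s in (0:ℝ)..t, ‖f₂ s‖ ^ 2 ≤ A₂) :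
    ‖duhamel a f t‖ ≤ A₁ + √(A₂ / (2 * a)) := by
  set k : ℝ → ℝ := fun s => Real.exp (-a * (t - s))
  have hk_cont : Continuous k := by fun_prop
  have hf₂k : IntervalIntegrable (fun s => ‖f₂ s‖ * k s) volume 0 t :=
    hf₂.norm_of_norm_sq.mul_continuousOn hk_cont.continuousOn
  have hpt : ∀ s ∈ Set.Icc 0 t, ‖f s‖ * k s ≤ ‖f₁ s‖ + ‖f₂ s‖ * k s := fun s hs => by
    have hk0 : 0 < k s := Real.exp_pos _
    have hk1 : k s ≤ 1 := Real.exp_le_one_iff.2 (by nlinarith [hs.2])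
    have := norm_add_le (f₁ s) (f₂ s)
    rw [← hsplit] at this
    nlinarith [norm_nonneg (f₁ s)]
  calc ‖duhamel a f t‖ ≤ ∫ s in (0:ℝ)..t, ‖f s‖ * k s := by
        refine (intervalIntegral.norm_integral_le_integral_norm ht).trans_eq
          (intervalIntegral.integral_congr fun s _ => ?_)
        rw [norm_mul, Complex.norm_real, Real.norm_of_nonneg (Real.exp_pos _).le]
    _ ≤ ∫ s in (0:ℝ)..t, (‖f₁ s‖ + ‖f₂ s‖ * k s) :=
        intervalIntegral.integral_mono_on ht (hf.norm.mul_continuousOn hk_cont.continuousOn)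
          (hf₁.add hf₂k) hpt
    _ = (∫ s in (0:ℝ)..t, ‖f₁ s‖) + ∫ s in (0:ℝ)..t, ‖f₂ s‖ * k s :=
        intervalIntegral.integral_add hf₁ hf₂k
    _ ≤ A₁ + √(A₂ * (1 / (2 * a))) :=
        add_le_add hf₁A <| integral_mul_le_sqrt_mul_of_integral_sq_le (f := fun s => ‖f₂ s‖) ht
          hf₂ ((hk_cont.pow 2).intervalIntegrable _ _) hA₂ (by positivity) hf₂A
          (integral_exp_neg_mul_sub_sq_le ha t)
    _ = A₁ + √(A₂ / (2 * a)) := by rw [mul_one_div]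

lemma mul_sqrt_add_sqrt_le_mul_rpow_quarter {μ C ε : ℝ} (hμ : 0 < μ) (hC : 0 ≤ C) (hε : 0 < ε)
    (hε1 : ε ≤ 1) :
    C * √ε + √((C + 1) / (2 * (μ / √ε))) ≤ (C + √((C + 1) / (2 * μ))) * ε ^ (1 / 4 : ℝ) := by
  have hq : ε ^ (1 / 4 : ℝ) = √√ε := by
    rw [Real.sqrt_eq_rpow, Real.sqrt_eq_rpow, ← Real.rpow_mul hε.le]
    norm_num
  have hq2 : √√ε ^ 2 = √ε := Real.sq_sqrt (Real.sqrt_nonneg ε)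
  have hq_ge : √ε ≤ √√ε := by
    have hq1 : √√ε ≤ 1 := Real.sqrt_le_one.2 (Real.sqrt_le_one.2 hε1)
    nlinarith [Real.sqrt_nonneg √ε]
  have hsplit : (C + 1) / (2 * (μ / √ε)) = (C + 1) / (2 * μ) * √√ε ^ 2 := by
    rw [hq2]
    field_simp [(Real.sqrt_pos.2 hε).ne']
  rw [hsplit, Real.sqrt_mul (by positivity), Real.sqrt_sq (by positivity), hq, add_mul]
  gcongr

lemma sqrt_integral_norm_duhamel_sq_le {μ T C ε : ℝ} {f f₁ f₂ : ℝ → ℂ} (hμ : 0 < μ)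
    (hT : 0 ≤ T) (hC : 0 ≤ C) (hε : 0 < ε) (hε1 : ε ≤ 1) (hf : IntervalIntegrable f volume 0 T)
    (hf₁ : IntervalIntegrable (fun s => ‖f₁ s‖) volume 0 T)
    (hf₂ : IntervalIntegrable (fun s => ‖f₂ s‖ ^ 2) volume 0 T)
    (hsplit : ∀ s, f s = f₁ s + f₂ s)
    (hf₁C : ∫ s in (0:ℝ)..T, ‖f₁ s‖ ≤ C * √ε) (hf₂C : ∫ s in (0:ℝ)..T, ‖f₂ s‖ ^ 2 ≤ C) :
    √(∫ t in (0:ℝ)..T, ‖duhamel (μ / √ε) f t‖ ^ 2)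
      ≤ √T * (C + √((C + 1) / (2 * μ))) * ε ^ (1 / 4 : ℝ) := by
  have hpt : ∀ t ∈ Set.uIoc 0 T,
      ‖duhamel (μ / √ε) f t‖ ≤ (C + √((C + 1) / (2 * μ))) * ε ^ (1 / 4 : ℝ) := by
    intro t ht
    rw [Set.uIoc_of_le hT] at ht
    have hsub : Set.uIcc 0 t ⊆ Set.uIcc 0 T :=
      Set.uIcc_subset_uIcc Set.left_mem_uIcc (by rw [Set.uIcc_of_le hT]; exact ⟨ht.1.le, ht.2⟩)
    have hmono {g : ℝ → ℝ} (hg : 0 ≤ g) (hgi : IntervalIntegrable g volume 0 T) :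
        ∫ s in (0:ℝ)..t, g s ≤ ∫ s in (0:ℝ)..T, g s :=
      intervalIntegral.integral_mono_interval le_rfl ht.1.le ht.2 (ae_of_all _ hg) hgi
    refine (norm_duhamel_le (A₂ := C + 1) (by positivity) ht.1.le (by positivity)
      (hf.mono_set hsub) (hf₁.mono_set hsub) (hf₂.mono_set hsub) hsplit
      ((hmono (fun _ => norm_nonneg _) hf₁).trans hf₁C)
      ((hmono (fun _ => sq_nonneg _) hf₂).trans (by linarith))).trans ?_
    exact mul_sqrt_add_sqrt_le_mul_rpow_quarter hμ hC hε hε1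
  simpa [abs_of_nonneg hT, mul_assoc] using sqrt_integral_norm_sq_le (by positivity) hpt

theorem stmt_18_general (μ T C : ℝ) (hμ : 0 < μ) (hT : 0 < T) (hC : 0 ≤ C)
    (c c1 c2 : ℝ → ℝ → ℂ)
    (hint : ∀ ε : ℝ, 0 < ε → IntervalIntegrable (c ε) volume 0 T)
    (hint1 : ∀ ε : ℝ, 0 < ε → IntervalIntegrable (fun s => ‖c1 ε s‖) volume 0 T)
    (hint2 : ∀ ε : ℝ, 0 < ε → IntervalIntegrable (fun s => ‖c2 ε s‖ ^ 2) volume 0 T)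
    (hdecomp : ∀ ε : ℝ, 0 < ε → ∀ s, c ε s = c1 ε s + c2 ε s)
    (hc1 : ∀ ε : ℝ, 0 < ε → (∫ s in (0:ℝ)..T, ‖c1 ε s‖) ≤ C * Real.sqrt ε)
    (hc2 : ∀ ε : ℝ, 0 < ε → (∫ s in (0:ℝ)..T, ‖c2 ε s‖ ^ 2) ≤ C) :
    (∃ C' > 0, ∀ ε : ℝ, 0 < ε → ε ≤ 1 →
      Real.sqrt (∫ t in (0:ℝ)..T,
          ‖∫ s in (0:ℝ)..t, c ε s *
              ((Real.exp (-(μ / Real.sqrt ε) * (t - s)) : ℝ) : ℂ)‖ ^ 2)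
        ≤ C' * ε ^ (1 / 4 : ℝ)) ∧
    Filter.Tendsto (fun ε : ℝ =>
        Real.sqrt (∫ t in (0:ℝ)..T,
          ‖∫ s in (0:ℝ)..t, c ε s *
              ((Real.exp (-(μ / Real.sqrt ε) * (t - s)) : ℝ) : ℂ)‖ ^ 2))
      (nhdsWithin 0 (Set.Ioi 0)) (nhds 0) := by
  set C' := √T * (C + √((C + 1) / (2 * μ)))
  have hbound : ∀ ε : ℝ, 0 < ε → ε ≤ 1 →
      √(∫ t in (0:ℝ)..T, ‖duhamel (μ / √ε) (c ε) t‖ ^ 2) ≤ C' * ε ^ (1 / 4 : ℝ) :=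
    fun ε hε hε1 => sqrt_integral_norm_duhamel_sq_le hμ hT.le hC hε hε1 (hint ε hε)
      (hint1 ε hε) (hint2 ε hε) (hdecomp ε hε) (hc1 ε hε) (hc2 ε hε)
  refine ⟨⟨C', by positivity, hbound⟩, ?_⟩
  have hlim : Filter.Tendsto (fun ε : ℝ => C' * ε ^ (1 / 4 : ℝ)) (nhdsWithin 0 (Set.Ioi 0))
      (nhds 0) := by
    simpa using ((Real.continuousAt_rpow_const 0 (1 / 4) (by norm_num)).tendsto.const_mul
      C').mono_left nhdsWithin_le_nhds
  refine squeeze_zero' (Filter.Eventually.of_forall fun ε => Real.sqrt_nonneg _) ?_ hlim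
  filter_upwards [Ioo_mem_nhdsGT one_pos] with ε hε using hbound ε hε.1 hε.2.le

/-- decay of the Duhamel integral with damped kernel: if c_ε = c_ε¹ + c_ε²
with ‖c_ε¹‖_{L¹(0,T)} ≤ C√ε and ‖c_ε²‖_{L²(0,T)} ≤ C (and c_ε uniformly in L²), then
t ↦ ∫₀ᵗ c_ε(s) e^{-(μ/√ε)(t−s)} ds → 0 in L²(0,T) as ε → 0⁺, with rate ε^{1/4}. -/
theorem stmt_18 (μ T C : ℝ) (hμ : 0 < μ) (hT : 0 < T) (hC : 0 ≤ C)
    (c c1 c2 : ℝ → ℝ → ℂ)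
    (hint : ∀ ε : ℝ, 0 < ε → IntervalIntegrable (c ε) volume 0 T)
    (hint1 : ∀ ε : ℝ, 0 < ε → IntervalIntegrable (fun s => ‖c1 ε s‖) volume 0 T)
    (hint2 : ∀ ε : ℝ, 0 < ε → IntervalIntegrable (fun s => ‖c2 ε s‖ ^ 2) volume 0 T)
    (hdecomp : ∀ ε : ℝ, 0 < ε → ∀ s, c ε s = c1 ε s + c2 ε s)
    (hc1 : ∀ ε : ℝ, 0 < ε → (∫ s in (0:ℝ)..T, ‖c1 ε s‖) ≤ C * Real.sqrt ε)
    (hc2 : ∀ ε : ℝ, 0 < ε → (∫ s in (0:ℝ)..T, ‖c2 ε s‖ ^ 2) ≤ C)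
    (hL2 : ∀ ε : ℝ, 0 < ε → (∫ s in (0:ℝ)..T, ‖c ε s‖ ^ 2) ≤ C) :
    (∃ C' > 0, ∀ ε : ℝ, 0 < ε → ε ≤ 1 →
      Real.sqrt (∫ t in (0:ℝ)..T,
          ‖∫ s in (0:ℝ)..t, c ε s *
              ((Real.exp (-(μ / Real.sqrt ε) * (t - s)) : ℝ) : ℂ)‖ ^ 2)
        ≤ C' * ε ^ (1 / 4 : ℝ)) ∧
    Filter.Tendsto (fun ε : ℝ =>
        Real.sqrt (∫ t in (0:ℝ)..T,
          ‖∫ s in (0:ℝ)..t, c ε s *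
              ((Real.exp (-(μ / Real.sqrt ε) * (t - s)) : ℝ) : ℂ)‖ ^ 2))
      (nhdsWithin 0 (Set.Ioi 0)) (nhds 0) :=
  stmt_18_general μ T C hμ hT hC c c1 c2 hint hint1 hint2 hdecomp hc1 hc2
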